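/- Let f be a piecewise contracting interval map with D ⊂ X̃ and x ∈ X̃ such that Δ_lr(x) = ∅. Then the itinerary η of x (the sequence with f^n(x) ∈ X_{η_n}) is eventually periodic; more precisely, its complexity function p_η(n) = #{words of length n in η} is eventually constant. -/

import Mathlib

open Filter Topology Set

/-- A piecewise contracting interval map on `X = [c 0, c N]` with contraction pieces
`X_i` delimited by the points `c 0 < c 1 < … < c N`, contraction rate `lam ∈ (0,1)`,
and `fe i` the (unique) continuous `lam`-Lipschitz extension of `f` restricted to the
`i`-th piece to its closure `[c (i-1), c i]`. The pieces are
`X_1 = [c 0, c 1)`, `X_i = (c (i-1), c i)` for `1 < i < N`, `X_N = (c (N-1), c N]`. -/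
structure PCIM where
  N : ℕ
  hN : 2 ≤ N
  c : ℕ → ℝ
  lam : ℝ
  f : ℝ → ℝ
  fe : ℕ → ℝ → ℝ
  hc : StrictMonoOn c (Set.Iic N)
  hlam : lam ∈ Set.Ioo (0 : ℝ) 1
  hmap : Set.MapsTo f (Set.Icc (c 0) (c N)) (Set.Icc (c 0) (c N))
  hfe_lip : ∀ i, 1 ≤ i → i ≤ N →
    ∀ x ∈ Set.Icc (c (i - 1)) (c i), ∀ y ∈ Set.Icc (c (i - 1)) (c i),
      |fe i x - fe i y| ≤ lam * |x - y|
  hfe_eq : ∀ i, 1 ≤ i → i ≤ N → ∀ x ∈ Set.Ioo (c (i - 1)) (c i), fe i x = f x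
  hfe_left : fe 1 (c 0) = f (c 0)
  hfe_right : fe N (c N) = f (c N)

namespace PCIM

variable (P : PCIM)

/-- The phase space `X = [c 0, c N]`. -/
def X : Set ℝ := Set.Icc (P.c 0) (P.c P.N)

/-- The `i`-th contraction piece (`1 ≤ i ≤ N`). -/
def piece (i : ℕ) : Set ℝ :=
  Set.Ioo (P.c (i - 1)) (P.c i)
    ∪ (if i = 1 then {P.c 0} else (∅ : Set ℝ))
    ∪ (if i = P.N then {P.c P.N} else (∅ : Set ℝ))

/-- `Δ`, the set of interior boundary points of the pieces. -/
def Δ : Set ℝ := {y | ∃ i, 1 ≤ i ∧ i < P.N ∧ y = P.c i}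

/-- `X̃ = ⋂ n, f⁻ⁿ(X \ Δ)`: points whose whole forward orbit stays in `X` and avoids `Δ`. -/
def Xt : Set ℝ := {x | ∀ n : ℕ, P.f^[n] x ∈ P.X \ P.Δ}

/-- Forward orbit of `x`. -/
def orbit (x : ℝ) : Set ℝ := Set.range fun n : ℕ => P.f^[n] x

/-- The ω-limit set of `x`: limits of subsequences of the forward orbit. -/
def omega (x : ℝ) : Set ℝ :=
  {y | ∃ φ : ℕ → ℕ, StrictMono φ ∧
    Filter.Tendsto (fun n => P.f^[φ n] x) Filter.atTop (nhds y)}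

/-- `d_i^- = f_i (c_i)`, the left lateral limit of `f` at `c i`. -/
def dminus (i : ℕ) : ℝ := P.fe i (P.c i)

/-- `d_i^+ = f_{i+1} (c_i)`, the right lateral limit of `f` at `c i`. -/
def dplus (i : ℕ) : ℝ := P.fe (i + 1) (P.c i)

/-- `D⁻ = {d_1^-, …, d_{N-1}^-}`. -/
def Dminus : Set ℝ := {y | ∃ i, 1 ≤ i ∧ i < P.N ∧ y = P.dminus i}

/-- `D⁺ = {d_1^+, …, d_{N-1}^+}`. -/
def Dplus : Set ℝ := {y | ∃ i, 1 ≤ i ∧ i < P.N ∧ y = P.dplus i}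

/-- `D`, the set of all one-sided limits of `f` at endpoints of the pieces. -/
def D : Set ℝ := P.Dminus ∪ P.Dplus ∪ {P.fe 1 (P.c 0), P.fe P.N (P.c P.N)}

/-- `A` is pseudo-invariant: for every `x ∈ A` at least one one-sided limit of `f`
at `x` (i.e. some `fe i x` with `x` in the closure of the `i`-th piece) belongs to `A`. -/
def PseudoInvariant (A : Set ℝ) : Prop :=
  ∀ x ∈ A, ∃ i, 1 ≤ i ∧ i ≤ P.N ∧ x ∈ Set.Icc (P.c (i - 1)) (P.c i) ∧ P.fe i x ∈ A

/-- `F_i(A) = closure (f (A ∩ X_i))`. -/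
def Fmap (i : ℕ) (A : Set ℝ) : Set ℝ := closure (P.f '' (A ∩ P.piece i))

/-- For a word `w = [i_1, …, i_n]`, the set `F_{i_n} ∘ … ∘ F_{i_1} (X)`. -/
def atomOf (w : List ℕ) : Set ℝ := w.foldl (fun S i => P.Fmap i S) P.X

/-- `A` is an atom of generation `n`. -/
def IsAtomGen (n : ℕ) (A : Set ℝ) : Prop :=
  ∃ w : List ℕ, w.length = n ∧ (∀ i ∈ w, 1 ≤ i ∧ i ≤ P.N) ∧
    A = P.atomOf w ∧ A.Nonempty

/-- `Lam n` is `Λ_{n+1}` of the paper: `Λ_1 = closure (f(X \ Δ))`,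
`Λ_{n+1} = closure (f(Λ_n \ Δ))`. -/
def Lam (P : PCIM) : ℕ → Set ℝ
  | 0 => closure (P.f '' (P.X \ P.Δ))
  | n + 1 => closure (P.f '' (P.Lam n \ P.Δ))

/-- The attractor `Λ = ⋂_{n ≥ 1} Λ_n`. -/
def attractor : Set ℝ := ⋂ n : ℕ, P.Lam n

/-- `c i ∈ Δ_lr(x)`: the boundary point `c i` is left-right recurrently visited by the
orbit of `x`. -/
def lrVisited (x : ℝ) (i : ℕ) : Prop :=
  1 ≤ i ∧ i < P.N ∧
  ∃ l r : ℕ → ℕ, StrictMono l ∧ StrictMono r ∧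
    (∀ j, P.f^[l j] x ∈ P.piece i) ∧ (∀ j, P.f^[r j] x ∈ P.piece (i + 1)) ∧
    Filter.Tendsto (fun j => P.f^[l j] x) Filter.atTop (nhds (P.c i)) ∧
    Filter.Tendsto (fun j => P.f^[r j] x) Filter.atTop (nhds (P.c i))

/-- `c i ∈ Δ_lr`: `c i` is left-right recurrently visited by the orbit of some point
of `X̃`. -/
def inΔlr (i : ℕ) : Prop := ∃ x ∈ P.Xt, P.lrVisited x i

/-- The set `Δ_lr ⊆ Δ`. -/
def ΔlrSet : Set ℝ := {y | ∃ i, P.inΔlr i ∧ y = P.c i}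

/-- The relation `∼⁺` on `Δ_lr`: `c_i ∼⁺ c_j` iff `c_i = c_j` or
(`c_i ∈ Δ_lr(d_j^+)` and `c_j ∈ Δ_lr(d_i^+)`). -/
def simP (a b : ℝ) : Prop :=
  a = b ∨ ∃ i j, P.inΔlr i ∧ P.inΔlr j ∧ a = P.c i ∧ b = P.c j ∧
    P.lrVisited (P.dplus j) i ∧ P.lrVisited (P.dplus i) j

/-- The relation `≼⁺` (on representatives): `[c_i] ≼⁺ [c_j]` iff `[c_i] = [c_j]` or
`c_i ∈ Δ_lr(d_j^+)`. -/
def preP (a b : ℝ) : Prop :=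
  P.simP a b ∨ ∃ i j, P.inΔlr i ∧ P.inΔlr j ∧ a = P.c i ∧ b = P.c j ∧
    P.lrVisited (P.dplus j) i

/-- `[c i]` is a minimal class for the partial order `≼⁺`. -/
def MinimalClass (i : ℕ) : Prop :=
  P.inΔlr i ∧ ∀ j, P.inΔlr j → P.preP (P.c j) (P.c i) → P.simP (P.c j) (P.c i)

/-- `f` is injective on each contraction piece. -/
def InjPieces : Prop := ∀ i, 1 ≤ i → i ≤ P.N → Set.InjOn P.f (P.piece i)

/-- `f` is (strictly) increasing on each contraction piece. -/
def IncrPieces : Prop := ∀ i, 1 ≤ i → i ≤ P.N → StrictMonoOn P.f (P.piece i)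

/-- `x` is a periodic point of `f`. -/
def IsPeriodic (x : ℝ) : Prop := ∃ p : ℕ, 1 ≤ p ∧ P.f^[p] x = x

/-- `η` is the itinerary of `x`: `f^[n] x ∈ X_{η n}` for all `n`. -/
def IsItinerary (x : ℝ) (η : ℕ → ℕ) : Prop :=
  ∀ n, 1 ≤ η n ∧ η n ≤ P.N ∧ P.f^[n] x ∈ P.piece (η n)

end PCIM

/-- The word of length `n` of the sequence `η` starting at position `t`. -/
def wordAt (η : ℕ → ℕ) (t n : ℕ) : List ℕ := (List.range n).map fun m => η (t + m)

/-- The complexity function of the sequence `η`: the number of distinct words of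
length `n` occurring in `η`. -/
noncomputable def complexity (η : ℕ → ℕ) (n : ℕ) : ℕ := Set.ncard {w : List ℕ | ∃ t, w = wordAt η t n}

lemma wordAt_take (η : ℕ → ℕ) (t n : ℕ) : (wordAt η t (n+1)).take n = wordAt η t n := by
  unfold wordAt
  rw [← List.map_take, List.take_range, min_eq_left (Nat.le_succ n)]

lemma nat_mono_bdd (u : ℕ → ℕ) (hmono : Monotone u) (B : ℕ) (hB : ∀ n, u n ≤ B) :
    ∃ n₀, ∀ n, n₀ ≤ n → u n = u n₀ := by
  have hne : (Set.range u).Nonempty := ⟨u 0, 0, rfl⟩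
  have hbdd : BddAbove (Set.range u) := ⟨B, by rintro _ ⟨n, rfl⟩; exact hB n⟩
  obtain ⟨n₀, hn₀⟩ := Nat.sSup_mem hne hbdd
  refine ⟨n₀, fun n hn => le_antisymm ?_ (hmono hn)⟩
  rw [hn₀]
  exact le_csSup hbdd ⟨n, rfl⟩

lemma complexity_eventually_const (η : ℕ → ℕ) (t p : ℕ) (hp : 1 ≤ p)
    (hper : ∀ n, t ≤ n → η (n + p) = η n) :
    ∃ n₀, ∀ n, n₀ ≤ n → complexity η n = complexity η n₀ := by
  -- every word appears at a position < t + p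
  have hword : ∀ n s, ∃ s' < t + p, wordAt η s n = wordAt η s' n := by
    intro n s
    induction s using Nat.strong_induction_on with
    | _ s ih =>
      rcases lt_or_ge s (t + p) with h | h
      · exact ⟨s, h, rfl⟩
      · have hsp : p ≤ s := le_trans (Nat.le_add_left p t) h
        have heq : wordAt η s n = wordAt η (s - p) n := by
          unfold wordAt
          apply List.map_congr_left
          intro m _
          have h1 : t ≤ s - p + m := le_trans (by omega) (Nat.le_add_right _ m)
          have := hper (s - p + m) h1
          rw [show s - p + m + p = s + m by omega] at this
          exact this
        obtain ⟨s', hs', he'⟩ := ih (s - p) (by omega)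
        exact ⟨s', hs', heq.trans he'⟩
  have hSeq : ∀ n, {w : List ℕ | ∃ s, w = wordAt η s n}
      = (fun s => wordAt η s n) '' (Set.Iio (t + p)) := by
    intro n
    ext w
    constructor
    · rintro ⟨s, rfl⟩
      obtain ⟨s', hs', he⟩ := hword n s
      exact ⟨s', hs', he.symm⟩
    · rintro ⟨s, _, rfl⟩
      exact ⟨s, rfl⟩
  have hfin : ∀ n, {w : List ℕ | ∃ s, w = wordAt η s n}.Finite := by
    intro n
    rw [hSeq n]
    exact (Set.finite_Iio _).image _
  have hbd : ∀ n, complexity η n ≤ t + p := by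
    intro n
    unfold complexity
    rw [hSeq n]
    calc ((fun s => wordAt η s n) '' (Set.Iio (t + p))).ncard
        ≤ (Set.Iio (t + p)).ncard := Set.ncard_image_le (Set.finite_Iio _)
      _ = t + p := by
          rw [← Finset.coe_range, Set.ncard_coe_finset, Finset.card_range]
  have hmono : Monotone (complexity η) := by
    apply monotone_nat_of_le_succ
    intro n
    unfold complexity
    have himg : {w : List ℕ | ∃ s, w = wordAt η s n}
        = (fun w : List ℕ => w.take n) '' {w : List ℕ | ∃ s, w = wordAt η s (n+1)} := by
      ext w
      constructor
      · rintro ⟨s, rfl⟩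
        exact ⟨wordAt η s (n+1), ⟨s, rfl⟩, wordAt_take η s n⟩
      · rintro ⟨v, ⟨s, rfl⟩, rfl⟩
        refine ⟨s, ?_⟩; simp [wordAt_take]
    rw [himg]
    exact Set.ncard_image_le (hfin (n+1))
  exact nat_mono_bdd _ hmono (t + p) hbd

namespace PCIM

variable (P : PCIM)

lemma c_lt_c {i j : ℕ} (hij : i < j) (hj : j ≤ P.N) : P.c i < P.c j :=
  P.hc (Set.mem_Iic.2 (le_trans hij.le hj)) (Set.mem_Iic.2 hj) hij

lemma piece_subset_Icc {i : ℕ} (h1 : 1 ≤ i) (hN : i ≤ P.N) :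
    P.piece i ⊆ Set.Icc (P.c (i - 1)) (P.c i) := by
  intro y hy
  rcases hy with (hy | hy) | hy
  · exact ⟨hy.1.le, hy.2.le⟩
  · split_ifs at hy with h
    · rcases hy with rfl
      subst h
      exact ⟨le_refl _, (P.c_lt_c (by norm_num) (le_trans h1 hN)).le⟩
    · exact absurd hy (Set.notMem_empty _)
  · split_ifs at hy with h
    · rcases hy with rfl
      subst h
      exact ⟨(P.c_lt_c (by omega) hN).le, le_refl _⟩
    · exact absurd hy (Set.notMem_empty _)

lemma f_eq_fe {i : ℕ} (h1 : 1 ≤ i) (hN : i ≤ P.N) {u : ℝ} (hu : u ∈ P.piece i) :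
    P.f u = P.fe i u := by
  rcases hu with (hu | hu) | hu
  · exact (P.hfe_eq i h1 hN u hu).symm
  · split_ifs at hu with h
    · rcases hu with rfl
      subst h
      exact P.hfe_left.symm
    · exact absurd hu (Set.notMem_empty _)
  · split_ifs at hu with h
    · rcases hu with rfl
      subst h
      exact P.hfe_right.symm
    · exact absurd hu (Set.notMem_empty _)

lemma f_lip {i : ℕ} (h1 : 1 ≤ i) (hN : i ≤ P.N) {u v : ℝ}
    (hu : u ∈ P.piece i) (hv : v ∈ P.piece i) :
    |P.f u - P.f v| ≤ P.lam * |u - v| := by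
  rw [P.f_eq_fe h1 hN hu, P.f_eq_fe h1 hN hv]
  exact P.hfe_lip i h1 hN u (P.piece_subset_Icc h1 hN hu) v (P.piece_subset_Icc h1 hN hv)

lemma piece_lt {i : ℕ} (h1 : 1 ≤ i) (hN : i < P.N) {y : ℝ} (hy : y ∈ P.piece i) :
    y < P.c i := by
  rcases hy with (hy | hy) | hy
  · exact hy.2
  · split_ifs at hy with h
    · rcases hy with rfl
      subst h
      exact P.c_lt_c (by norm_num) hN.le
    · exact absurd hy (Set.notMem_empty _)
  · split_ifs at hy with h
    · omega
    · exact absurd hy (Set.notMem_empty _)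

lemma piece_gt {i : ℕ} (h1 : 1 < i) (hN : i ≤ P.N) {y : ℝ} (hy : y ∈ P.piece i) :
    P.c (i - 1) < y := by
  rcases hy with (hy | hy) | hy
  · exact hy.1
  · split_ifs at hy with h
    · omega
    · exact absurd hy (Set.notMem_empty _)
  · split_ifs at hy with h
    · rcases hy with rfl
      subst h
      exact P.c_lt_c (by omega) (le_refl _)
    · exact absurd hy (Set.notMem_empty _)

lemma piece_eq {i j : ℕ} (h1i : 1 ≤ i) (hiN : i ≤ P.N) (h1j : 1 ≤ j) (hjN : j ≤ P.N)
    {y : ℝ} (hyi : y ∈ P.piece i) (hyj : y ∈ P.piece j) : i = j := by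
  by_contra hne
  wlog hij : i < j generalizing i j
  · exact this h1j hjN h1i hiN hyj hyi (Ne.symm hne) (by omega)
  have h1 : y < P.c i := P.piece_lt h1i (lt_of_lt_of_le hij hjN) hyi
  have h2 : P.c (j - 1) < y := P.piece_gt (by omega) hjN hyj
  have h3 : P.c i ≤ P.c (j - 1) := by
    rcases eq_or_lt_of_le (show i ≤ j - 1 by omega) with h | h
    · rw [h]
    · exact (P.c_lt_c h (by omega)).le
  linarith

lemma straddle {i j : ℕ} (h1i : 1 ≤ i) (hjN : j ≤ P.N) (hij : i < j)
    {u v : ℝ} (hu : u ∈ P.piece i) (hv : v ∈ P.piece j) {ε : ℝ} (hd : |u - v| < ε) :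
    ∃ k, 1 ≤ k ∧ k < P.N ∧ u ∈ Set.Ioo (P.c k - ε) (P.c k) ∧ v ∈ Set.Ioo (P.c k) (P.c k + ε) := by
  have hiltN : i < P.N := lt_of_lt_of_le hij hjN
  have h1 : u < P.c i := P.piece_lt h1i hiltN hu
  have h2 : P.c (j - 1) < v := P.piece_gt (by omega) hjN hv
  have h3 : P.c i ≤ P.c (j - 1) := by
    rcases eq_or_lt_of_le (show i ≤ j - 1 by omega) with h | h
    · rw [h]
    · exact (P.c_lt_c h (by omega)).le
  have huv : u < v := lt_trans h1 (lt_of_le_of_lt h3 h2)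
  have habs : v - u < ε := by rw [abs_sub_comm] at hd; rwa [abs_of_pos (by linarith)] at hd
  exact ⟨i, h1i, hiltN, ⟨by linarith, h1⟩, ⟨lt_of_le_of_lt h3 h2, by linarith⟩⟩

end PCIM

lemma build_seq (o : ℕ → ℝ) (y : ℝ) (S : ℝ → Set ℝ)
    (hS : ∀ ε δ : ℝ, 0 < δ → δ ≤ ε → S δ ⊆ S ε)
    (hSd : ∀ ε : ℝ, ∀ z ∈ S ε, |z - y| < ε)
    (h : ∀ ε : ℝ, 0 < ε → ∃ a, o a ∈ S ε) (hne : ∀ a, o a ≠ y)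
    (g : ℝ) (hg : 0 < g) :
    ∃ l : ℕ → ℕ, StrictMono l ∧ (∀ j : ℕ, o (l j) ∈ S (min g (1/((j:ℝ)+1)))) ∧
      Tendsto (fun j => o (l j)) atTop (nhds y) := by
  have step : ∀ n : ℕ, ∀ ε : ℝ, ∃ a, n < a ∧ (0 < ε → o a ∈ S ε) := by
    intro n ε
    by_cases hε : 0 < ε
    · have hne' : (Finset.range (n+1)).Nonempty := ⟨0, by simp⟩
      set m := (Finset.range (n+1)).inf' hne' (fun a => |o a - y|) with hm
      have hmpos : 0 < m := by
        rw [hm, Finset.lt_inf'_iff]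
        intro a _
        exact abs_pos.2 (sub_ne_zero.2 (hne a))
      obtain ⟨a, ha⟩ := h (min ε m) (lt_min hε hmpos)
      have haS : o a ∈ S ε := hS ε (min ε m) (lt_min hε hmpos) (min_le_left _ _) ha
      refine ⟨a, ?_, fun _ => haS⟩
      by_contra hle
      push_neg at hle
      have h1 : |o a - y| < min ε m := hSd _ _ ha
      have h2 : m ≤ |o a - y| := Finset.inf'_le _ (Finset.mem_range.2 (by omega))
      have := min_le_right ε m
      linarith
    · exact ⟨n + 1, Nat.lt_succ_self n, fun h' => absurd h' hε⟩
  choose F hF1 hF2 using step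
  let l : ℕ → ℕ := fun j =>
    Nat.rec (F 0 (min g 1)) (fun k lk => F lk (min g (1/((k:ℝ)+2)))) j
  have hls : ∀ k, l (k+1) = F (l k) (min g (1/((k:ℝ)+2))) := fun k => rfl
  have hmono : StrictMono l := by
    apply strictMono_nat_of_lt_succ
    intro k
    rw [hls k]
    exact hF1 _ _
  have hmem : ∀ j : ℕ, o (l j) ∈ S (min g (1/((j:ℝ)+1))) := by
    intro j
    cases j with
    | zero =>
      have : o (l 0) ∈ S (min g 1) := hF2 0 (min g 1) (lt_min hg one_pos)
      simpa using this
    | succ k =>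
      have hpos : (0:ℝ) < min g (1/((k:ℝ)+2)) := lt_min hg (by positivity)
      have : o (l (k+1)) ∈ S (min g (1/((k:ℝ)+2))) := by
        rw [hls k]; exact hF2 _ _ hpos
      have hcast : ((k+1 : ℕ) : ℝ) + 1 = (k:ℝ) + 2 := by push_cast; ring
      rw [hcast]
      exact this
  have htend : Tendsto (fun j => o (l j)) atTop (nhds y) := by
    rw [Metric.tendsto_atTop]
    intro ε hε
    obtain ⟨K, hK⟩ := exists_nat_one_div_lt hε
    refine ⟨K, fun j hj => ?_⟩
    have h1 : |o (l j) - y| < min g (1/((j:ℝ)+1)) := hSd _ _ (hmem j)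
    have h2 : (1:ℝ)/((j:ℝ)+1) ≤ 1/((K:ℝ)+1) := by
      have : (K:ℝ) ≤ (j:ℝ) := by exact_mod_cast hj
      gcongr
    rw [Real.dist_eq]
    calc |o (l j) - y| < min g (1/((j:ℝ)+1)) := h1
      _ ≤ 1/((j:ℝ)+1) := min_le_right _ _
      _ ≤ 1/((K:ℝ)+1) := h2
      _ < ε := hK
  exact ⟨l, hmono, hmem, htend⟩

/-- If `D ⊆ X̃`, `x ∈ X̃` and `Δ_lr(x) = ∅`, then the complexity function of the
itinerary `η` of `x` is eventually constant and `η` is eventually periodic. -/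
theorem stmt10 (P : PCIM) (hD : P.D ⊆ P.Xt) (x : ℝ) (hx : x ∈ P.Xt)
    (hlr : ∀ i, ¬ P.lrVisited x i) (η : ℕ → ℕ) (hη : P.IsItinerary x η) :
    (∃ n₀, ∀ n, n₀ ≤ n → complexity η n = complexity η n₀) ∧
      (∃ t p, 1 ≤ p ∧ ∀ n, t ≤ n → η (n + p) = η n) := by

  classical
  have hox : ∀ n : ℕ, P.f^[n] x ∈ P.X \ P.Δ := hx
  have hne_c : ∀ (n i : ℕ), 1 ≤ i → i < P.N → P.f^[n] x ≠ P.c i := fun n i h1 h2 h3 =>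
    (hox n).2 ⟨i, h1, h2, h3⟩
  have hbounds : ∀ n : ℕ, P.c 0 ≤ P.f^[n] x ∧ P.f^[n] x ≤ P.c P.N := fun n => (hox n).1
  have hN1 : 1 ≤ P.N := le_trans one_le_two P.hN
  have hgne : (Finset.Icc 1 P.N).Nonempty := ⟨1, Finset.mem_Icc.2 ⟨le_refl _, hN1⟩⟩
  set g : ℝ := (Finset.Icc 1 P.N).inf' hgne (fun i => P.c i - P.c (i - 1)) with hgdef
  have hg_le : ∀ i : ℕ, 1 ≤ i → i ≤ P.N → g ≤ P.c i - P.c (i - 1) := fun i h1 h2 =>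
    Finset.inf'_le _ (Finset.mem_Icc.2 ⟨h1, h2⟩)
  have hg_pos : 0 < g := by
    rw [hgdef, Finset.lt_inf'_iff]
    intro i hi
    rw [Finset.mem_Icc] at hi
    have := P.c_lt_c (show i - 1 < i by omega) hi.2
    linarith
  suffices key : ∃ t p, 1 ≤ p ∧ ∀ n, t ≤ n → η (n + p) = η n by
    obtain ⟨t, p, hp, hper⟩ := key
    exact ⟨complexity_eventually_const η t p hp hper, t, p, hp, hper⟩
  by_cases hA : ∀ ε : ℝ, 0 < ε → ∃ i, 1 ≤ i ∧ i < P.N ∧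
      (∃ a, P.f^[a] x ∈ Set.Ioo (P.c i - ε) (P.c i)) ∧
      (∃ b, P.f^[b] x ∈ Set.Ioo (P.c i) (P.c i + ε))
  · exfalso
    have hA' : ∀ k : ℕ, ∃ i, 1 ≤ i ∧ i < P.N ∧
        (∃ a, P.f^[a] x ∈ Set.Ioo (P.c i - 1/((k:ℝ)+1)) (P.c i)) ∧
        (∃ b, P.f^[b] x ∈ Set.Ioo (P.c i) (P.c i + 1/((k:ℝ)+1))) :=
      fun k => hA _ (by positivity)
    choose I hI1 hI2 hI3 hI4 using hA'
    obtain ⟨y0, hy0⟩ := Finite.exists_infinite_fiber (fun k : ℕ => (⟨I k, hI2 k⟩ : Fin P.N))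
    have hTinf : {k : ℕ | I k = (y0 : ℕ)}.Infinite := by
      have h1 := Set.infinite_coe_iff.1 hy0
      convert h1 using 1
      ext k
      simp [Fin.ext_iff]
    set i := (y0 : ℕ) with hidef
    obtain ⟨k₀, hk₀⟩ := hTinf.nonempty
    have h1i : 1 ≤ i := by rw [← hk₀]; exact hI1 k₀
    have hiN : i < P.N := by rw [← hk₀]; exact hI2 k₀
    have hbig : ∀ ε : ℝ, 0 < ε → ∃ k : ℕ, I k = i ∧ 1/((k:ℝ)+1) < ε := by
      intro ε hε
      obtain ⟨K, hK⟩ := exists_nat_one_div_lt hε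
      obtain ⟨k, hkT, hKk⟩ := hTinf.exists_gt K
      refine ⟨k, hkT, lt_of_le_of_lt ?_ hK⟩
      have hc : (K:ℝ) ≤ (k:ℝ) := by exact_mod_cast hKk.le
      gcongr
    have hleft : ∀ ε : ℝ, 0 < ε → ∃ a, P.f^[a] x ∈ Set.Ioo (P.c i - ε) (P.c i) := by
      intro ε hε
      obtain ⟨k, hkI, hkε⟩ := hbig ε hε
      obtain ⟨a, ha⟩ := hI3 k
      rw [hkI] at ha
      exact ⟨a, ⟨by linarith [ha.1], ha.2⟩⟩
    have hright : ∀ ε : ℝ, 0 < ε → ∃ b, P.f^[b] x ∈ Set.Ioo (P.c i) (P.c i + ε) := by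
      intro ε hε
      obtain ⟨k, hkI, hkε⟩ := hbig ε hε
      obtain ⟨b, hb⟩ := hI4 k
      rw [hkI] at hb
      exact ⟨b, ⟨hb.1, by linarith [hb.2]⟩⟩
    obtain ⟨l, hlmono, hlmem, hltend⟩ := build_seq (fun n => P.f^[n] x) (P.c i)
      (fun ε => Set.Ioo (P.c i - ε) (P.c i))
      (fun ε δ hδ hδε => Set.Ioo_subset_Ioo (by linarith) (le_refl _))
      (fun ε z hz => by
        simp only [Set.mem_Ioo] at hz
        exact abs_sub_lt_iff.2 ⟨by linarith, by linarith⟩)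
      hleft (fun a => hne_c a i h1i hiN) g hg_pos
    obtain ⟨r, hrmono, hrmem, hrtend⟩ := build_seq (fun n => P.f^[n] x) (P.c i)
      (fun ε => Set.Ioo (P.c i) (P.c i + ε))
      (fun ε δ hδ hδε => Set.Ioo_subset_Ioo (le_refl _) (by linarith))
      (fun ε z hz => by
        simp only [Set.mem_Ioo] at hz
        exact abs_sub_lt_iff.2 ⟨by linarith, by linarith⟩)
      hright (fun b => hne_c b i h1i hiN) g hg_pos
    refine hlr i ⟨h1i, hiN, l, r, hlmono, hrmono, ?_, ?_, hltend, hrtend⟩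
    · intro j
      have h := hlmem j
      have hmin : min g (1/((j:ℝ)+1)) ≤ g := min_le_left _ _
      have hgi := hg_le i h1i hiN.le
      unfold PCIM.piece
      apply Set.mem_union_left
      apply Set.mem_union_left
      exact ⟨by linarith [h.1], h.2⟩
    · intro j
      have h := hrmem j
      have hmin : min g (1/((j:ℝ)+1)) ≤ g := min_le_left _ _
      have hgi := hg_le (i+1) (by omega) (by omega)
      have hieq : i + 1 - 1 = i := by omega
      rw [hieq] at hgi
      unfold PCIM.piece
      rw [hieq]
      apply Set.mem_union_left
      apply Set.mem_union_left
      exact ⟨h.1, by linarith [h.2]⟩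
  · rw [not_forall] at hA
    obtain ⟨ε₀, hA⟩ := hA
    rw [Classical.not_imp] at hA
    obtain ⟨hε₀, hBad₀⟩ := hA
    set ε := min ε₀ g with hεdef
    have hεpos : 0 < ε := lt_min hε₀ hg_pos
    have hεg : ε ≤ g := min_le_right _ _
    have hεε₀ : ε ≤ ε₀ := min_le_left _ _
    have hBad : ¬ ∃ i, 1 ≤ i ∧ i < P.N ∧
        (∃ a, P.f^[a] x ∈ Set.Ioo (P.c i - ε) (P.c i)) ∧
        (∃ b, P.f^[b] x ∈ Set.Ioo (P.c i) (P.c i + ε)) := by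
      intro h
      apply hBad₀
      obtain ⟨i, h1, h2, ⟨a, ha⟩, ⟨b, hb⟩⟩ := h
      exact ⟨i, h1, h2, ⟨a, Set.Ioo_subset_Ioo (by linarith) (le_refl _) ha⟩,
        ⟨b, Set.Ioo_subset_Ioo (le_refl _) (by linarith) hb⟩⟩
    have keyB : ∀ a b : ℕ, η a = η b → |P.f^[a] x - P.f^[b] x| < ε →
        ∀ t : ℕ, η (a+t) = η (b+t) ∧ |P.f^[a+t] x - P.f^[b+t] x| < ε := by
      intro a b hab hd t
      induction t with
      | zero => exact ⟨by simpa using hab, by simpa using hd⟩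
      | succ t ih =>
        obtain ⟨he, hdt⟩ := ih
        have hpa : P.f^[a+t] x ∈ P.piece (η (a+t)) := (hη (a+t)).2.2
        have hpb : P.f^[b+t] x ∈ P.piece (η (a+t)) := by rw [he]; exact (hη (b+t)).2.2
        have hstep : |P.f^[a+(t+1)] x - P.f^[b+(t+1)] x| < ε := by
          have e1 : P.f^[a+(t+1)] x = P.f (P.f^[a+t] x) := by
            rw [show a+(t+1) = (a+t)+1 by ring, Function.iterate_succ_apply']
          have e2 : P.f^[b+(t+1)] x = P.f (P.f^[b+t] x) := by
            rw [show b+(t+1) = (b+t)+1 by ring, Function.iterate_succ_apply']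
          rw [e1, e2]
          calc |P.f (P.f^[a+t] x) - P.f (P.f^[b+t] x)|
              ≤ P.lam * |P.f^[a+t] x - P.f^[b+t] x| :=
                P.f_lip (hη (a+t)).1 (hη (a+t)).2.1 hpa hpb
            _ ≤ |P.f^[a+t] x - P.f^[b+t] x| :=
                mul_le_of_le_one_left (abs_nonneg _) P.hlam.2.le
            _ < ε := hdt
        refine ⟨?_, hstep⟩
        by_contra hne
        rcases Ne.lt_or_gt hne with hlt | hlt
        · obtain ⟨k, hk1, hk2, hku, hkv⟩ := P.straddle (hη (a+(t+1))).1 (hη (b+(t+1))).2.1 hlt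
            (hη (a+(t+1))).2.2 (hη (b+(t+1))).2.2 hstep
          exact hBad ⟨k, hk1, hk2, ⟨_, hku⟩, ⟨_, hkv⟩⟩
        · have hstep' : |P.f^[b+(t+1)] x - P.f^[a+(t+1)] x| < ε := by rwa [abs_sub_comm]
          obtain ⟨k, hk1, hk2, hku, hkv⟩ := P.straddle (hη (b+(t+1))).1 (hη (a+(t+1))).2.1 hlt
            (hη (b+(t+1))).2.2 (hη (a+(t+1))).2.2 hstep'
          exact hBad ⟨k, hk1, hk2, ⟨_, hku⟩, ⟨_, hkv⟩⟩
    obtain ⟨y1, hy1⟩ := Finite.exists_infinite_fiber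
      (fun n : ℕ => (⟨η n, Nat.lt_succ_of_le (hη n).2.1⟩ : Fin (P.N+1)))
    have hTinf : {n : ℕ | η n = (y1 : ℕ)}.Infinite := by
      have h1 := Set.infinite_coe_iff.1 hy1
      convert h1 using 1
      ext n
      simp [Fin.ext_iff]
    set K := ⌊(P.c P.N - P.c 0)/ε⌋₊ + 1 with hKdef
    have hmapsTo : Set.MapsTo (fun n => ⌊(P.f^[n] x - P.c 0)/ε⌋₊) {n : ℕ | η n = (y1:ℕ)}
        (↑(Finset.range K)) := by
      intro n _
      simp only [Finset.coe_range, Set.mem_Iio]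
      have h1 : (P.f^[n] x - P.c 0)/ε ≤ (P.c P.N - P.c 0)/ε := by
        have h2 : P.f^[n] x - P.c 0 ≤ P.c P.N - P.c 0 := by linarith [(hbounds n).2]
        gcongr
      calc ⌊(P.f^[n] x - P.c 0)/ε⌋₊ ≤ ⌊(P.c P.N - P.c 0)/ε⌋₊ := Nat.floor_mono h1
        _ < K := by omega
    obtain ⟨a, haT, b, hbT, habne, hbe⟩ :=
      hTinf.exists_ne_map_eq_of_mapsTo hmapsTo (Finset.range K).finite_toSet
    have hηab : η a = η b := haT.trans hbT.symm
    have hdab : |P.f^[a] x - P.f^[b] x| < ε := by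
      set A := (P.f^[a] x - P.c 0)/ε with hAdef
      set B := (P.f^[b] x - P.c 0)/ε with hBdef2
      have hA0 : 0 ≤ A := div_nonneg (by linarith [(hbounds a).1]) hεpos.le
      have hB0 : 0 ≤ B := div_nonneg (by linarith [(hbounds b).1]) hεpos.le
      have h1 : (⌊A⌋₊ : ℝ) ≤ A := Nat.floor_le hA0
      have h2 : A < ⌊A⌋₊ + 1 := Nat.lt_floor_add_one A
      have h3 : (⌊B⌋₊ : ℝ) ≤ B := Nat.floor_le hB0
      have h4 : B < ⌊B⌋₊ + 1 := Nat.lt_floor_add_one B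
      have heq : (⌊A⌋₊ : ℝ) = (⌊B⌋₊ : ℝ) := by exact_mod_cast hbe
      have hABlt : |A - B| < 1 := abs_sub_lt_iff.2 ⟨by linarith, by linarith⟩
      have hABeq : A - B = (P.f^[a] x - P.f^[b] x)/ε := by rw [hAdef, hBdef2]; ring
      rw [hABeq, abs_div, abs_of_pos hεpos, div_lt_one hεpos] at hABlt
      exact hABlt
    rcases Ne.lt_or_gt habne with hab | hab
    · refine ⟨a, b - a, by omega, fun n hn => ?_⟩
      have h := (keyB a b hηab hdab (n - a)).1
      rw [show a + (n - a) = n by omega, show b + (n - a) = n + (b - a) by omega] at h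
      exact h.symm
    · refine ⟨b, a - b, by omega, fun n hn => ?_⟩
      have h := (keyB a b hηab hdab (n - b)).1
      rw [show b + (n - b) = n by omega, show a + (n - b) = n + (a - b) by omega] at h
      exact h
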